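/- (Harmonicity of the first variation of the metric factor, from Section 5.) Let μ : ℍ → ℂ and ν : ℍ → Mₙ(ℂ) be smooth, and let (t, z) ↦ Φ₊^t(z) and (t, z) ↦ Φ₋^t(z) be smooth families of maps ℍ → GL(n,ℂ), defined for t in a neighborhood of 0 in ℝ, such that Φ₊⁰ ≡ I, Φ₋⁰ ≡ I, ∂̄Φ₊^t = t·μ·∂Φ₊^t for all t, and ∂Φ₋^t = 0 for all t (Wirtinger derivatives in z, entrywise). Set Φ₂^t := Φ₊^t · Φ₋^t and F := ∂_t|_{t=0} [ (conj(Φ₂^t))^T · Φ₂^t ], where (conj(·))^T denotes the conjugate transpose. Then ∂∂̄F = 0 on ℍ, i.e. every entry of F is a harmonic function. -/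

import Mathlib

/-!
Write `A = ∂ₜΦ₊ᵗ|₀` and `B = ∂ₜΦ₋ᵗ|₀`. Since `Φ₊⁰ = Φ₋⁰ = I`, the product rule gives
`F = (A + B)ᴴ + (A + B)`. Differentiating `∂̄Φ₊ᵗ = tμ ∂Φ₊ᵗ` at `t = 0` gives `∂̄A = μ ∂I = 0`,
and differentiating `∂Φ₋ᵗ = 0` gives `∂B = 0`; here `∂ₜ` commutes with `∂` and `∂̄` by the
symmetry of second derivatives of the jointly smooth families. So the entries of `A` are
holomorphic and those of `B` antiholomorphic, hence harmonic because `∂∂̄ = ∂̄∂` on `C²`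
functions, and `∂∂̄` commutes with complex conjugation, which takes care of `(A + B)ᴴ`.
-/

open Complex

/-- The open upper half-plane in ℂ. -/
def UHP : Set ℂ := {z : ℂ | 0 < z.im}

/-- The Wirtinger derivative ∂f = (1/2)(∂f/∂x - i·∂f/∂y). -/
noncomputable def wD (f : ℂ → ℂ) (z : ℂ) : ℂ :=
  (1 / 2) * (fderiv ℝ f z 1 - Complex.I * fderiv ℝ f z Complex.I)

/-- The Wirtinger derivative ∂̄f = (1/2)(∂f/∂x + i·∂f/∂y). -/
noncomputable def wDbar (f : ℂ → ℂ) (z : ℂ) : ℂ :=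
  (1 / 2) * (fderiv ℝ f z 1 + Complex.I * fderiv ℝ f z Complex.I)

/-- Entrywise Wirtinger derivative ∂ of a matrix-valued function. -/
noncomputable def mwD (n : ℕ) (f : ℂ → Matrix (Fin n) (Fin n) ℂ) (z : ℂ) :
    Matrix (Fin n) (Fin n) ℂ :=
  Matrix.of fun i j => wD (fun w => f w i j) z

/-- Entrywise Wirtinger derivative ∂̄ of a matrix-valued function. -/
noncomputable def mwDbar (n : ℕ) (f : ℂ → Matrix (Fin n) (Fin n) ℂ) (z : ℂ) :
    Matrix (Fin n) (Fin n) ℂ :=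
  Matrix.of fun i j => wDbar (fun w => f w i j) z

/-- Entrywise smoothness (C^∞ over ℝ) of a matrix-valued function on a set. -/
def MSmoothOn (n : ℕ) (f : ℂ → Matrix (Fin n) (Fin n) ℂ) (s : Set ℂ) : Prop :=
  ∀ i j, ContDiffOn ℝ (⊤ : ℕ∞) (fun z => f z i j) s

/-- Entrywise derivative at `t = 0` of a one-parameter family of matrices. -/
noncomputable def mderiv0 (n : ℕ) (f : ℝ → Matrix (Fin n) (Fin n) ℂ) :
    Matrix (Fin n) (Fin n) ℂ :=
  Matrix.of fun i j => deriv (fun t => f t i j) 0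

/-- Joint entrywise smoothness (C^∞ over ℝ) of a one-parameter family of
matrix-valued functions on `D × s`. -/
def MSmoothOn2 (n : ℕ) (f : ℝ → ℂ → Matrix (Fin n) (Fin n) ℂ)
    (D : Set ℝ) (s : Set ℂ) : Prop :=
  ∀ i j, ContDiffOn ℝ (⊤ : ℕ∞) (fun p : ℝ × ℂ => f p.1 p.2 i j) (D ×ˢ s)

open Filter Topology Matrix

lemma isOpen_UHP : IsOpen UHP := isOpen_lt continuous_const Complex.continuous_im

lemma hasFDerivAt_fderiv_apply {𝕜 E F : Type*} [NontriviallyNormedField 𝕜]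
    [NormedAddCommGroup E] [NormedSpace 𝕜 E] [NormedAddCommGroup F] [NormedSpace 𝕜 F]
    {f : E → F} {x : E} (hf : ContDiffAt 𝕜 2 f x) (v : E) :
    HasFDerivAt (fun y => fderiv 𝕜 f y v) ((fderiv 𝕜 (fderiv 𝕜 f) x).flip v) x := by
  have hD : DifferentiableAt 𝕜 (fderiv 𝕜 f) x :=
    (hf.fderiv_right (m := 1) (by norm_num)).differentiableAt one_ne_zero
  simpa using hD.hasFDerivAt.clm_apply (hasFDerivAt_const v x)

lemma ContDiffAt.eventually_differentiableAt {𝕜 E F : Type*} [NontriviallyNormedField 𝕜]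
    [NormedAddCommGroup E] [NormedSpace 𝕜 E] [NormedAddCommGroup F] [NormedSpace 𝕜 F]
    {f : E → F} {x : E} {n : WithTop ℕ∞} (hf : ContDiffAt 𝕜 n f x) (hn : 1 ≤ n) :
    ∀ᶠ y in 𝓝 x, DifferentiableAt 𝕜 f y :=
  ((hf.of_le hn).eventually (by simp)).mono fun _ hy => hy.differentiableAt one_ne_zero

section Wirtinger

variable {f g : ℂ → ℂ} {z : ℂ}

theorem Filter.EventuallyEq.wD (h : f =ᶠ[𝓝 z] g) : wD f =ᶠ[𝓝 z] wD g := by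
  filter_upwards [h.fderiv (𝕜 := ℝ)] with w hw
  simp only [_root_.wD, hw]

theorem Filter.EventuallyEq.wDbar (h : f =ᶠ[𝓝 z] g) : wDbar f =ᶠ[𝓝 z] wDbar g := by
  filter_upwards [h.fderiv (𝕜 := ℝ)] with w hw
  simp only [_root_.wDbar, hw]

@[simp] lemma wD_const (c : ℂ) : wD (fun _ => c) z = 0 := by simp [wD]

@[simp] lemma wDbar_const (c : ℂ) : wDbar (fun _ => c) z = 0 := by simp [wDbar]

lemma wD_add (hf : DifferentiableAt ℝ f z) (hg : DifferentiableAt ℝ g z) :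
    wD (fun w => f w + g w) z = wD f z + wD g z := by
  simp only [wD, fderiv_fun_add hf hg, _root_.add_apply]
  ring

lemma wDbar_add (hf : DifferentiableAt ℝ f z) (hg : DifferentiableAt ℝ g z) :
    wDbar (fun w => f w + g w) z = wDbar f z + wDbar g z := by
  simp only [wDbar, fderiv_fun_add hf hg, _root_.add_apply]
  ring

lemma wD_star : wD (fun w => star (f w)) z = star (wDbar f z) := by
  rw [wD, wDbar, fderiv_star]
  simp only [ContinuousLinearMap.comp_apply, ContinuousLinearEquiv.coe_coe, starL'_apply,
    star_mul', star_add, star_div₀, star_one, star_ofNat, RCLike.star_def, conj_I]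
  ring

lemma wDbar_star : wDbar (fun w => star (f w)) z = star (wD f z) := by
  rw [wD, wDbar, fderiv_star]
  simp only [ContinuousLinearMap.comp_apply, ContinuousLinearEquiv.coe_coe, starL'_apply,
    star_mul', star_sub, star_div₀, star_one, star_ofNat, RCLike.star_def, conj_I]
  ring

lemma hasFDerivAt_wD (hf : ContDiffAt ℝ 2 f z) :
    HasFDerivAt (wD f) ((1 / 2 : ℂ) • ((fderiv ℝ (fderiv ℝ f) z).flip 1 -
      I • (fderiv ℝ (fderiv ℝ f) z).flip I)) z :=
  ((hasFDerivAt_fderiv_apply hf 1).sub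
    ((hasFDerivAt_fderiv_apply hf I).const_mul I)).const_mul (1 / 2 : ℂ)

lemma hasFDerivAt_wDbar (hf : ContDiffAt ℝ 2 f z) :
    HasFDerivAt (wDbar f) ((1 / 2 : ℂ) • ((fderiv ℝ (fderiv ℝ f) z).flip 1 +
      I • (fderiv ℝ (fderiv ℝ f) z).flip I)) z :=
  ((hasFDerivAt_fderiv_apply hf 1).add
    ((hasFDerivAt_fderiv_apply hf I).const_mul I)).const_mul (1 / 2 : ℂ)

lemma wD_wDbar_comm (hf : ContDiffAt ℝ 2 f z) : wD (wDbar f) z = wDbar (wD f) z := by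
  have hsymm := hf.isSymmSndFDerivAt (by simp) 1 I
  rw [wD, wDbar, (hasFDerivAt_wDbar hf).fderiv, (hasFDerivAt_wD hf).fderiv]
  simp only [_root_.add_apply, _root_.sub_apply, _root_.smul_apply,
    ContinuousLinearMap.flip_apply, smul_eq_mul, hsymm]
  ring

end Wirtinger

section Harmonic

variable {f g : ℂ → ℂ} {z : ℂ}

lemma wD_wDbar_add (hf : ContDiffAt ℝ 2 f z) (hg : ContDiffAt ℝ 2 g z) :
    wD (wDbar fun w => f w + g w) z = wD (wDbar f) z + wD (wDbar g) z := by
  have hsum : wDbar (fun w => f w + g w) =ᶠ[𝓝 z] fun w => wDbar f w + wDbar g w := by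
    filter_upwards [hf.eventually (by simp), hg.eventually (by simp)] with w hfw hgw
    exact wDbar_add (hfw.differentiableAt two_ne_zero) (hgw.differentiableAt two_ne_zero)
  rw [hsum.wD.eq_of_nhds]
  exact wD_add (hasFDerivAt_wDbar hf).differentiableAt (hasFDerivAt_wDbar hg).differentiableAt

lemma wD_wDbar_star (hf : ContDiffAt ℝ 2 f z) :
    wD (wDbar fun w => star (f w)) z = star (wD (wDbar f) z) := by
  have hbar : wDbar (fun w => star (f w)) = fun w => star (wD f w) :=
    funext fun _ => wDbar_star
  rw [hbar, wD_star, wD_wDbar_comm hf]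

lemma wD_wDbar_add_eq_zero (hf : ContDiffAt ℝ 2 f z) (hg : ContDiffAt ℝ 2 g z)
    (hf_holo : ∀ᶠ w in 𝓝 z, wDbar f w = 0) (hg_antiholo : ∀ᶠ w in 𝓝 z, wD g w = 0) :
    wD (wDbar fun w => f w + g w) z = 0 := by
  have hf0 : wD (wDbar f) z = 0 := by
    have hbar : wDbar f =ᶠ[𝓝 z] fun _ => 0 := hf_holo
    rw [hbar.wD.eq_of_nhds, wD_const]
  have hg0 : wD (wDbar g) z = 0 := by
    have hd : wD g =ᶠ[𝓝 z] fun _ => 0 := hg_antiholo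
    rw [wD_wDbar_comm hg, hd.wDbar.eq_of_nhds, wDbar_const]
  rw [wD_wDbar_add hf hg, hf0, hg0, add_zero]

end Harmonic

section Slice

variable {E F : Type*} [NormedAddCommGroup E] [NormedSpace ℝ E]
  [NormedAddCommGroup F] [NormedSpace ℝ F] {h : ℝ × E → F} {t : ℝ} {x : E}

lemma hasDerivAt_comp_prodMk_left (hh : DifferentiableAt ℝ h (t, x)) :
    HasDerivAt (fun s => h (s, x)) (fderiv ℝ h (t, x) (1, 0)) t :=
  (hh.hasFDerivAt.comp_hasDerivAt t ((hasDerivAt_id t).prodMk (hasDerivAt_const t x))).congr_deriv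
    (by simp)

lemma hasFDerivAt_comp_prodMk_right (hh : DifferentiableAt ℝ h (t, x)) :
    HasFDerivAt (fun y => h (t, y)) ((fderiv ℝ h (t, x)).comp (.inr ℝ ℝ E)) x :=
  hh.hasFDerivAt.comp x (hasFDerivAt_prodMk_right t x)

lemma contDiffAt_deriv_slice {m n : WithTop ℕ∞} (hh : ContDiffAt ℝ n h (t, x))
    (hmn : m + 1 ≤ n) : ContDiffAt ℝ m (fun y => deriv (fun s => h (s, y)) t) x := by
  have hdiff : ∀ᶠ y in 𝓝 x, DifferentiableAt ℝ h (t, y) :=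
    (continuous_const.prodMk continuous_id).tendsto x |>.eventually
      (hh.eventually_differentiableAt (le_trans le_add_self hmn))
  refine ContDiffAt.congr_of_eventuallyEq ?_
    (hdiff.mono fun y hy => (hasDerivAt_comp_prodMk_left hy).deriv)
  exact ((hh.fderiv_right hmn).clm_apply contDiffAt_const).comp x
    (contDiffAt_const.prodMk contDiffAt_id)

lemma hasDerivAt_fderiv_slice (hh : ContDiffAt ℝ 2 h (t, x)) (v : E) :
    HasDerivAt (fun s => fderiv ℝ (fun y => h (s, y)) x v)
      (fderiv ℝ (fun y => deriv (fun s => h (s, y)) t) x v) t := by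
  set D2 := fderiv ℝ (fderiv ℝ h) (t, x)
  have hdiff := hh.eventually_differentiableAt (by norm_num)
  have hs : (fun s => fderiv ℝ (fun y => h (s, y)) x v) =ᶠ[𝓝 t]
      fun s => fderiv ℝ h (s, x) (0, v) :=
    ((continuous_id.prodMk continuous_const).tendsto t |>.eventually hdiff).mono
      fun s (hds : DifferentiableAt ℝ h (s, x)) => by
        simp [(hasFDerivAt_comp_prodMk_right hds).fderiv]
  have hy : (fun y => deriv (fun s => h (s, y)) t) =ᶠ[𝓝 x]
      fun y => fderiv ℝ h (t, y) (1, 0) :=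
    ((continuous_const.prodMk continuous_id).tendsto x |>.eventually hdiff).mono
      fun y hdy => (hasDerivAt_comp_prodMk_left hdy).deriv
  have hright : fderiv ℝ (fun y => deriv (fun s => h (s, y)) t) x v = D2 (0, v) (1, 0) := by
    have hcomp : HasFDerivAt (fun y => fderiv ℝ h (t, y) (1, 0))
        (D2.flip (1, 0) ∘L .inr ℝ ℝ E) x :=
      (hasFDerivAt_fderiv_apply hh (1, 0)).comp x (hasFDerivAt_prodMk_right t x)
    rw [hy.fderiv_eq, hcomp.fderiv]
    simp
  rw [hright, ← hh.isSymmSndFDerivAt (by simp) (1, 0) (0, v)]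
  refine HasDerivAt.congr_of_eventuallyEq ?_ hs
  exact (hasFDerivAt_fderiv_apply hh (0, v)).comp_hasDerivAt t
    ((hasDerivAt_id t).prodMk (hasDerivAt_const t x))

end Slice

section FirstVariation

variable {h : ℝ × ℂ → ℂ} {t : ℝ} {z : ℂ}

lemma hasDerivAt_wD_slice (hh : ContDiffAt ℝ 2 h (t, z)) :
    HasDerivAt (fun s => wD (fun w => h (s, w)) z)
      (wD (fun w => deriv (fun s => h (s, w)) t) z) t :=
  ((hasDerivAt_fderiv_slice hh 1).sub ((hasDerivAt_fderiv_slice hh I).const_mul I)).const_mul _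

lemma hasDerivAt_wDbar_slice (hh : ContDiffAt ℝ 2 h (t, z)) :
    HasDerivAt (fun s => wDbar (fun w => h (s, w)) z)
      (wDbar (fun w => deriv (fun s => h (s, w)) t) z) t :=
  ((hasDerivAt_fderiv_slice hh 1).add ((hasDerivAt_fderiv_slice hh I).const_mul I)).const_mul _

lemma wD_deriv_slice_eq_zero (hh : ContDiffAt ℝ 2 h (t, z))
    (hantiholo : ∀ᶠ s in 𝓝 t, wD (fun w => h (s, w)) z = 0) :
    wD (fun w => deriv (fun s => h (s, w)) t) z = 0 :=
  (hasDerivAt_wD_slice hh).unique ((hasDerivAt_const t 0).congr_of_eventuallyEq hantiholo)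

lemma wDbar_deriv_slice_eq_zero {c : ℂ} (hh : ContDiffAt ℝ 2 h (0, z))
    (hbeltrami : ∀ᶠ s in 𝓝 0, wDbar (fun w => h (s, w)) z = (s * c) * wD (fun w => h (s, w)) z)
    (h₀ : wD (fun w => h (0, w)) z = 0) :
    wDbar (fun w => deriv (fun s => h (s, w)) 0) z = 0 := by
  have hrhs := (((hasDerivAt_id (0 : ℝ)).ofReal_comp).mul_const c).mul (hasDerivAt_wD_slice hh)
  have := (hasDerivAt_wDbar_slice hh).unique (hrhs.congr_of_eventuallyEq hbeltrami)
  simpa [h₀] using this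

end FirstVariation

section MatrixCurves

variable {ι : Type*} {P Q : ℝ → Matrix ι ι ℂ} {P' Q' : Matrix ι ι ℂ} {t : ℝ}

lemma hasDerivAt_matrix_mul_apply [Fintype ι]
    (hP : ∀ i j, HasDerivAt (fun s => P s i j) (P' i j) t)
    (hQ : ∀ i j, HasDerivAt (fun s => Q s i j) (Q' i j) t) (i j : ι) :
    HasDerivAt (fun s => (P s * Q s) i j) ((P' * Q t + P t * Q') i j) t := by
  simp only [Matrix.mul_apply, Matrix.add_apply, ← Finset.sum_add_distrib]
  exact HasDerivAt.fun_sum fun k _ => (hP i k).mul (hQ k j)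

lemma hasDerivAt_matrix_mul_apply_of_eq_one [Fintype ι] [DecidableEq ι]
    (hP : ∀ i j, HasDerivAt (fun s => P s i j) (P' i j) t)
    (hQ : ∀ i j, HasDerivAt (fun s => Q s i j) (Q' i j) t) (hP₁ : P t = 1) (hQ₁ : Q t = 1)
    (i j : ι) :
    HasDerivAt (fun s => (P s * Q s) i j) ((P' + Q') i j) t := by
  simpa [hP₁, hQ₁] using hasDerivAt_matrix_mul_apply hP hQ i j

lemma hasDerivAt_conjTranspose_apply (hP : ∀ i j, HasDerivAt (fun s => P s i j) (P' i j) t)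
    (i j : ι) : HasDerivAt (fun s => (P s)ᴴ i j) (P'ᴴ i j) t :=
  (hP j i).star

end MatrixCurves

section MatrixFunctions

variable {n : ℕ}

lemma mderiv0_conjTranspose_mul_self {X : ℝ → Matrix (Fin n) (Fin n) ℂ}
    {X' : Matrix (Fin n) (Fin n) ℂ}
    (hX : ∀ i j, HasDerivAt (fun t => X t i j) (X' i j) 0) (hX₁ : X 0 = 1) :
    mderiv0 n (fun t => (X t)ᴴ * X t) = X'ᴴ + X' := by
  ext i j
  exact (hasDerivAt_matrix_mul_apply_of_eq_one (hasDerivAt_conjTranspose_apply hX) hX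
    (by simp [hX₁]) hX₁ i j).deriv

lemma MSmoothOn2.contDiffAt {f : ℝ → ℂ → Matrix (Fin n) (Fin n) ℂ} {D : Set ℝ} {s : Set ℂ}
    (hf : MSmoothOn2 n f D s) {t : ℝ} {x : ℂ} (hD : D ∈ 𝓝 t) (hs : s ∈ 𝓝 x) (m : ℕ) (i j : Fin n) :
    ContDiffAt ℝ m (fun p : ℝ × ℂ => f p.1 p.2 i j) (t, x) :=
  ((hf i j).contDiffAt (prod_mem_nhds hD hs)).of_le (by exact_mod_cast le_top)

lemma MSmoothOn2.hasDerivAt {f : ℝ → ℂ → Matrix (Fin n) (Fin n) ℂ} {D : Set ℝ} {s : Set ℂ}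
    (hf : MSmoothOn2 n f D s) {t : ℝ} {x : ℂ} (hD : D ∈ 𝓝 t) (hs : s ∈ 𝓝 x) (i j : Fin n) :
    HasDerivAt (fun r => f r x i j) (deriv (fun r => f r x i j) t) t := by
  have hslice : ContDiffAt ℝ 1 (fun r => f r x i j) t :=
    (hf.contDiffAt hD hs 1 i j).comp t (contDiffAt_id.prodMk contDiffAt_const)
  exact (hslice.differentiableAt one_ne_zero).hasDerivAt

variable {Φ : ℝ → ℂ → Matrix (Fin n) (Fin n) ℂ} {z : ℂ}

lemma mwD_mderiv0_eq_zero (hΦ : ∀ i j, ContDiffAt ℝ 2 (fun p : ℝ × ℂ => Φ p.1 p.2 i j) (0, z))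
    (hantiholo : ∀ᶠ t in 𝓝 0, mwD n (Φ t) z = 0) :
    mwD n (fun w => mderiv0 n fun t => Φ t w) z = 0 := by
  ext i j
  exact wD_deriv_slice_eq_zero (h := fun p => Φ p.1 p.2 i j) (hΦ i j)
    (hantiholo.mono fun t ht => by simpa [mwD] using congr_fun₂ ht i j)

lemma mwDbar_mderiv0_eq_zero {c : ℂ}
    (hΦ : ∀ i j, ContDiffAt ℝ 2 (fun p : ℝ × ℂ => Φ p.1 p.2 i j) (0, z))
    (hΦ₀ : ∀ᶠ w in 𝓝 z, Φ 0 w = 1)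
    (hbeltrami : ∀ᶠ t in 𝓝 0, mwDbar n (Φ t) z = ((t : ℂ) * c) • mwD n (Φ t) z) :
    mwDbar n (fun w => mderiv0 n fun t => Φ t w) z = 0 := by
  ext i j
  have h₀ : (fun w => Φ 0 w i j) =ᶠ[𝓝 z] fun _ => (1 : Matrix (Fin n) (Fin n) ℂ) i j :=
    hΦ₀.mono fun w hw => by simp [hw]
  exact wDbar_deriv_slice_eq_zero (h := fun p => Φ p.1 p.2 i j) (hΦ i j)
    (hbeltrami.mono fun t ht => by simpa [mwD, mwDbar] using congr_fun₂ ht i j)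
    (h₀.wD.eq_of_nhds.trans (wD_const _))

lemma mwD_mwDbar_eq_zero {F A B : ℂ → Matrix (Fin n) (Fin n) ℂ}
    (hF : F =ᶠ[𝓝 z] fun w => (A w + B w)ᴴ + (A w + B w))
    (hA : ∀ i j, ContDiffAt ℝ 2 (fun w => A w i j) z)
    (hB : ∀ i j, ContDiffAt ℝ 2 (fun w => B w i j) z)
    (hA_holo : ∀ᶠ w in 𝓝 z, mwDbar n A w = 0) (hB_antiholo : ∀ᶠ w in 𝓝 z, mwD n B w = 0) :
    mwD n (mwDbar n F) z = 0 := by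
  have hG : ∀ i j, ContDiffAt ℝ 2 (fun w => A w i j + B w i j) z :=
    fun i j => (hA i j).add (hB i j)
  have hG₀ : ∀ i j, wD (wDbar fun w => A w i j + B w i j) z = 0 := fun i j =>
    wD_wDbar_add_eq_zero (hA i j) (hB i j)
      (hA_holo.mono fun w hw => by simpa [mwDbar] using congr_fun₂ hw i j)
      (hB_antiholo.mono fun w hw => by simpa [mwD] using congr_fun₂ hw i j)
  ext i j
  have hFij : (fun w => F w i j) =ᶠ[𝓝 z]
      fun w => star (A w j i + B w j i) + (A w i j + B w i j) :=
    hF.mono fun w hw => by simp [hw]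
  have hstar : ContDiffAt ℝ 2 (fun w => star (A w j i + B w j i)) z :=
    (starL' ℝ : ℂ ≃L[ℝ] ℂ).contDiff.contDiffAt.comp z (hG j i)
  change wD (wDbar fun w => F w i j) z = 0
  rw [hFij.wDbar.wD.eq_of_nhds, wD_wDbar_add hstar (hG i j), wD_wDbar_star (hG j i), hG₀, hG₀,
    star_zero, add_zero]

end MatrixFunctions

open Matrix in
theorem first_variation_metric_factor_harmonic_general (n : ℕ)
    (D : Set ℝ) (hD : D ∈ nhds (0 : ℝ))
    (μ : ℂ → ℂ)
    (Φp Φm : ℝ → ℂ → Matrix (Fin n) (Fin n) ℂ)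
    (hΦp_smooth : MSmoothOn2 n Φp D UHP)
    (hΦm_smooth : MSmoothOn2 n Φm D UHP)
    (hΦp_zero : ∀ z ∈ UHP, Φp 0 z = 1)
    (hΦm_zero : ∀ z ∈ UHP, Φm 0 z = 1)
    (hΦp_eq : ∀ t ∈ D, ∀ z ∈ UHP,
      mwDbar n (Φp t) z = ((t : ℂ) * μ z) • mwD n (Φp t) z)
    (hΦm_eq : ∀ t ∈ D, ∀ z ∈ UHP, mwD n (Φm t) z = 0) :
    ∀ z ∈ UHP,
      mwD n (fun w =>
          mwDbar n (fun w' =>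
              mderiv0 n (fun t => (Φp t w' * Φm t w')ᴴ * (Φp t w' * Φm t w'))) w) z
        = 0 := by
  intro z hz
  have hUHP : ∀ w ∈ UHP, UHP ∈ 𝓝 w := fun w hw => isOpen_UHP.mem_nhds hw
  have hp := fun w (hw : w ∈ UHP) => hΦp_smooth.contDiffAt hD (hUHP w hw)
  have hm := fun w (hw : w ∈ UHP) => hΦm_smooth.contDiffAt hD (hUHP w hw)
  refine mwD_mwDbar_eq_zero (A := fun w => mderiv0 n fun t => Φp t w)
    (B := fun w => mderiv0 n fun t => Φm t w) ?_
    (fun i j => contDiffAt_deriv_slice (hp z hz 3 i j) (by norm_num))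
    (fun i j => contDiffAt_deriv_slice (hm z hz 3 i j) (by norm_num)) ?_ ?_
  · filter_upwards [hUHP z hz] with w hw
    exact mderiv0_conjTranspose_mul_self
      (hasDerivAt_matrix_mul_apply_of_eq_one (hΦp_smooth.hasDerivAt hD (hUHP w hw))
        (hΦm_smooth.hasDerivAt hD (hUHP w hw)) (hΦp_zero w hw) (hΦm_zero w hw))
      (by simp [hΦp_zero w hw, hΦm_zero w hw])
  · filter_upwards [hUHP z hz] with w hw
    exact mwDbar_mderiv0_eq_zero (hp w hw 2) (eventually_of_mem (hUHP w hw) hΦp_zero)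
      (eventually_of_mem hD fun t ht => hΦp_eq t ht w hw)
  · filter_upwards [hUHP z hz] with w hw
    exact mwD_mderiv0_eq_zero (hm w hw 2) (eventually_of_mem hD fun t ht => hΦm_eq t ht w hw)

open Matrix in
/-- harmonicity of the first variation of the metric factor: with
`Φ₂^t = Φ₊^t · Φ₋^t`, `Φ₊⁰ ≡ I ≡ Φ₋⁰`, `∂̄Φ₊^t = t·μ·∂Φ₊^t` and `∂Φ₋^t = 0`, the
matrix-valued function `F = ∂_t|₀ [(conj Φ₂^t)ᵀ · Φ₂^t]` satisfies `∂∂̄F = 0` on ℍ. -/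
theorem first_variation_metric_factor_harmonic (n : ℕ)
    (D : Set ℝ) (hD : D ∈ nhds (0 : ℝ))
    (μ : ℂ → ℂ) (hμ_smooth : ContDiffOn ℝ (⊤ : ℕ∞) μ UHP)
    (ν : ℂ → Matrix (Fin n) (Fin n) ℂ) (hν_smooth : MSmoothOn n ν UHP)
    (Φp Φm : ℝ → ℂ → Matrix (Fin n) (Fin n) ℂ)
    (hΦp_smooth : MSmoothOn2 n Φp D UHP)
    (hΦm_smooth : MSmoothOn2 n Φm D UHP)
    (hΦp_inv : ∀ t ∈ D, ∀ z ∈ UHP, IsUnit (Φp t z))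
    (hΦm_inv : ∀ t ∈ D, ∀ z ∈ UHP, IsUnit (Φm t z))
    (hΦp_zero : ∀ z ∈ UHP, Φp 0 z = 1)
    (hΦm_zero : ∀ z ∈ UHP, Φm 0 z = 1)
    (hΦp_eq : ∀ t ∈ D, ∀ z ∈ UHP,
      mwDbar n (Φp t) z = ((t : ℂ) * μ z) • mwD n (Φp t) z)
    (hΦm_eq : ∀ t ∈ D, ∀ z ∈ UHP, mwD n (Φm t) z = 0) :
    ∀ z ∈ UHP,
      mwD n (fun w =>
          mwDbar n (fun w' =>
              mderiv0 n (fun t => (Φp t w' * Φm t w')ᴴ * (Φp t w' * Φm t w'))) w) z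
        = 0 :=
  first_variation_metric_factor_harmonic_general n D hD μ Φp Φm hΦp_smooth hΦm_smooth hΦp_zero
    hΦm_zero hΦp_eq hΦm_eq
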